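/- arXiv:2107.03569 — 2 statements merged into one kernel-verified Lean document; each statement's English description precedes it below -/
import Mathlib

section
/- In the OV-to-HB reduction trace, a write event w(z) in the thread group of vector x ∈ A1 happens-before the read event r(z) in the thread t_y of vector y ∈ A2 if and only if x and y are not orthogonal (there exists a coordinate i with x[i] = y[i] = 1). Consequently, the constructed trace has an HB-race between some write and some read of z if and only if the OV instance (A1, A2) has an orthogonal pair. -/
inductive Op : Type
  | read (x : ℕ)
  | write (x : ℕ)
  | acquire (l : ℕ)
  | release (l : ℕ)
  deriving DecidableEq

structure Event where
  tid : ℕ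
  op : Op
  deriving DecidableEq

/-- A concurrent trace: a finite sequence of events, each with a thread id and an operation.
Events are identified with their positions `Fin N`; trace order is the order on `Fin N`. -/
structure Trace where
  N : ℕ
  tid : Fin N → ℕ
  op : Fin N → Op

/-- Happens-before: the smallest (reflexive, transitive) order containing thread order and
ordering each release of a lock before every later (in trace order) acquire of that lock. -/
inductive HB (σ : Trace) : Fin σ.N → Fin σ.N → Prop
  | refl (i : Fin σ.N) : HB σ i i
  | thread {i j : Fin σ.N} : i < j → σ.tid i = σ.tid j → HB σ i j
  | relAcq {i j : Fin σ.N} (l : ℕ) : i < j → σ.op i = Op.release l → σ.op j = Op.acquire l →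
      HB σ i j
  | trans {i j k : Fin σ.N} : HB σ i j → HB σ j k → HB σ i k

def accessesVar (σ : Trace) (e : Fin σ.N) (x : ℕ) : Prop :=
  σ.op e = Op.read x ∨ σ.op e = Op.write x

/-- Build a trace from a list of events. -/
def Trace.ofList (es : List Event) : Trace :=
  ⟨es.length, fun i => (es.get i).tid, fun i => (es.get i).op⟩

/-- An empty critical section of thread `t` on lock `l`. -/
def cs (t l : ℕ) : List Event := [⟨t, Op.acquire l⟩, ⟨t, Op.release l⟩]

/-- Lock `ℓ^x` for the vector with index `a` of `A1`. -/
def lockX (a : ℕ) : ℕ := Nat.pair 0 a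
/-- Lock `ℓ_i` for coordinate `i`. -/
def lockI (i : ℕ) : ℕ := Nat.pair 1 i
/-- Lock `ℓ_(y,i)` for the vector with index `y` of `A2` and coordinate `i`. -/
def lockYI (y i : ℕ) : ℕ := Nat.pair 2 (Nat.pair y i)
/-- Thread `t(x, i)` (with `i = 0, …, d`). -/
def tidX (a i : ℕ) : ℕ := Nat.pair 0 (Nat.pair a i)
/-- Thread `t_y`. -/
def tidY (y : ℕ) : ℕ := Nat.pair 1 y

/-- `a` is the last vector of `A` whose coordinate `i` equals 1. -/
def isLast {n d : ℕ} (A : Fin n → Fin d → Bool) (a : Fin n) (i : Fin d) : Prop :=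
  A a i = true ∧ ∀ b : Fin n, a < b → A b i = false

/-- Thread `t(x,0)`: write `z` (variable 0), then an empty critical section on `ℓ^x`. -/
def threadX0 {n : ℕ} (a : Fin n) : List Event :=
  ⟨tidX a.val 0, Op.write 0⟩ :: cs (tidX a.val 0) (lockX a.val)

open scoped Classical in
/-- Thread `t(x,i)` for `i ∈ [d]`: a critical section on `ℓ^x`; if `x[i] = 1` a critical
section on `ℓ_i`, and additionally (if `x` is the last vector of `A1` with `x[i]=1`)
critical sections on `ℓ_(y,i)` for all `y ∈ A2`. -/
noncomputable def threadXi {n d : ℕ} (A1 : Fin n → Fin d → Bool) (a : Fin n) (i : Fin d) :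
    List Event :=
  cs (tidX a.val (i.val + 1)) (lockX a.val) ++
  (if A1 a i then
    cs (tidX a.val (i.val + 1)) (lockI i.val) ++
    (if isLast A1 a i then
      ((List.finRange n).map (fun y => cs (tidX a.val (i.val + 1)) (lockYI y.val i.val))).flatten
     else [])
   else [])

/-- Thread `t_y`: critical sections on `ℓ_(y,i)` for each `i` with `y[i]=1`, then `r(z)`. -/
def threadY {n d : ℕ} (A2 : Fin n → Fin d → Bool) (y : Fin n) : List Event :=
  (((List.finRange d).filter (fun i => A2 y i)).map
    (fun i => cs (tidY y.val) (lockYI y.val i.val))).flatten ++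
  [⟨tidY y.val, Op.read 0⟩]

/-- The OV-to-HB trace: all threads `t(x,i)` in vector order of `A1`, then all threads `t_y`. -/
noncomputable def ovhbTrace {n d : ℕ} (A1 A2 : Fin n → Fin d → Bool) : Trace :=
  Trace.ofList
    (((List.finRange n).map (fun a =>
        threadX0 a ++ ((List.finRange d).map (fun i => threadXi A1 a i)).flatten)).flatten ++
     ((List.finRange n).map (fun y => threadY A2 y)).flatten)

/-
If `x[i] = y[i] = 1`, let `x'` be the last vector of `A1` with `x'[i] = 1`. Then
`w(z) → rel ℓ^x → acq ℓ^x in t(x,i) → rel ℓ_i in t(x,i) → acq ℓ_i in t(x',i) → rel ℓ_(y,i)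
→ acq ℓ_(y,i) in t_y → r(z)` is a chain of thread-order and release–acquire edges (when `x = x'`
its middle is thread order in `t(x,i)`).

Conversely, the events `Downstream` of the write of `x` (the thread group of `x`, every critical
section on a lock `ℓ_i` or `ℓ_(y,i)` with `x[i] = 1`, and the threads `t_y` with `y` not orthogonal
to `x`) are closed under both kinds of edges. Two facts about trace order make this work: in every
thread `t(x',i)` the section on `ℓ^x'` comes first, and all of the `A1` part precedes all of the
`A2` part. The latter also shows that no read happens before a write, so a race is exactly an
orthogonal pair.
-/

open List Relation

theorem List.pair_sublist_finRange {m : ℕ} {x y : Fin m} (h : x < y) : [x, y] <+ finRange m := by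
  simpa using map_getElem_sublist (l := finRange m) (is := [⟨x, by simp⟩, ⟨y, by simp⟩])
    (by simpa using h)

theorem List.pair_sublist_append {α : Type*} {P Q : List α} {v w : α} (hv : v ∈ P) (hw : w ∈ Q) :
    [v, w] <+ P ++ Q :=
  (singleton_sublist.2 hv).append (singleton_sublist.2 hw)

theorem List.pair_sublist_flatten_map_finRange {α : Type*} {m : ℕ} (f : Fin m → List α)
    {x y : Fin m} (h : x < y) {v w : α} (hv : v ∈ f x) (hw : w ∈ f y) :
    [v, w] <+ ((finRange m).map f).flatten :=
  calc [v, w] <+ f x ++ f y := pair_sublist_append hv hw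
    _ <+ _ := by simpa using ((pair_sublist_finRange h).map f).flatten

theorem List.nodup_flatten_map {ι α : Type*} {l : List ι} {f : ι → List α} (hl : l.Nodup)
    (hf : ∀ x, (f x).Nodup) (hdisj : ∀ x y, ∀ v ∈ f x, v ∈ f y → x = y) :
    (l.map f).flatten.Nodup := by
  rw [← flatMap_def, nodup_flatMap]
  exact ⟨fun x _ => hf x, hl.pairwise_of_forall_ne
    fun x _ y _ hxy => disjoint_left.2 fun v hx hy => hxy (hdisj x y v hx hy)⟩

theorem List.Nodup.lt_of_pair_sublist {α : Type*} {L : List α} (hL : L.Nodup)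
    {p q : Fin L.length} (h : [L.get p, L.get q] <+ L) : p < q := by
  obtain ⟨is, his, hlt⟩ := sublist_eq_map_getElem h
  rcases is with _ | ⟨i, _ | ⟨j, _ | ⟨_, _⟩⟩⟩ <;> simp only [map_cons, map_nil, cons.injEq,
    reduceCtorEq, and_false, and_true] at his
  have hp : p = i := hL.get_inj_iff.1 (by simpa using his.1)
  have hq : q = j := hL.get_inj_iff.1 (by simpa using his.2)
  simpa [hp, hq] using hlt

theorem HB.le {σ : Trace} {i j : Fin σ.N} (h : HB σ i j) : i ≤ j := by
  induction h with
  | refl => exact le_rfl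
  | thread h _ => exact h.le
  | relAcq _ h _ _ => exact h.le
  | trans _ _ ih₁ ih₂ => exact ih₁.trans ih₂

theorem HB.propagate {σ : Trace} {P : Fin σ.N → Prop}
    (thread : ∀ {i j}, i < j → σ.tid i = σ.tid j → P i → P j)
    (relAcq : ∀ {i j} l, i < j → σ.op i = .release l → σ.op j = .acquire l → P i → P j)
    {i j : Fin σ.N} (h : HB σ i j) : P i → P j := by
  induction h with
  | refl => exact id
  | thread hij ht => exact thread hij ht
  | relAcq l hij hi hj => exact relAcq l hij hi hj
  | trans _ _ ih₁ ih₂ => exact ih₂ ∘ ih₁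

def HBEdge (L : List Event) (v w : Event) : Prop :=
  [v, w] <+ L ∧ (v.tid = w.tid ∨ ∃ l, v.op = .release l ∧ w.op = .acquire l)

theorem HB.ofList_of_reflTransGen {L : List Event} (hL : L.Nodup) {v w : Event}
    (h : ReflTransGen (HBEdge L) v w) {p q : Fin (Trace.ofList L).N}
    (hp : L.get p = v) (hq : L.get q = w) : HB (Trace.ofList L) p q := by
  induction h generalizing q with
  | refl => exact hL.get_inj_iff.1 (hp.trans hq.symm) ▸ HB.refl p
  | tail _ hedge ih =>
    obtain ⟨r, hr⟩ := mem_iff_get.1 (hedge.1.subset mem_cons_self)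
    have hrq : r < q := hL.lt_of_pair_sublist (by rw [hr, hq]; exact hedge.1)
    refine (ih hr).trans ?_
    rcases hedge.2 with htid | ⟨l, hrel, hacq⟩
    · exact HB.thread hrq (show (L.get r).tid = (L.get q).tid by rw [hr, hq, htid])
    · exact HB.relAcq l hrq (show (L.get r).op = _ by rw [hr, hrel])
        (show (L.get q).op = _ by rw [hq, hacq])

theorem Event.eq_mk_iff {v : Event} {t : ℕ} {o : Op} : v = ⟨t, o⟩ ↔ v.tid = t ∧ v.op = o := by
  cases v
  simp

def Op.lock : Op → Option ℕ
  | .acquire l | .release l => some l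
  | _ => none

namespace OVHB

@[simp] theorem tidX_inj {a i a' i' : ℕ} : tidX a i = tidX a' i' ↔ a = a' ∧ i = i' := by
  simp [tidX, Nat.pair_eq_pair]

@[simp] theorem tidY_inj {y y' : ℕ} : tidY y = tidY y' ↔ y = y' := by
  simp [tidY, Nat.pair_eq_pair]

@[simp] theorem tidX_ne_tidY {a i y : ℕ} : tidX a i ≠ tidY y := by
  simp [tidX, tidY, Nat.pair_eq_pair]

@[simp] theorem tidY_ne_tidX {a i y : ℕ} : tidY y ≠ tidX a i := tidX_ne_tidY.symm

@[simp] theorem lockX_inj {a a' : ℕ} : lockX a = lockX a' ↔ a = a' := by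
  simp [lockX, Nat.pair_eq_pair]

@[simp] theorem lockI_inj {i i' : ℕ} : lockI i = lockI i' ↔ i = i' := by
  simp [lockI, Nat.pair_eq_pair]

@[simp] theorem lockYI_inj {y i y' i' : ℕ} : lockYI y i = lockYI y' i' ↔ y = y' ∧ i = i' := by
  simp [lockYI, Nat.pair_eq_pair]

@[simp] theorem lockX_ne_lockI {a i : ℕ} : lockX a ≠ lockI i := by
  simp [lockX, lockI, Nat.pair_eq_pair]

@[simp] theorem lockX_ne_lockYI {a y i : ℕ} : lockX a ≠ lockYI y i := by
  simp [lockX, lockYI, Nat.pair_eq_pair]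

@[simp] theorem lockI_ne_lockYI {i y i' : ℕ} : lockI i ≠ lockYI y i' := by
  simp [lockI, lockYI, Nat.pair_eq_pair]

@[simp] theorem lockI_ne_lockX {a i : ℕ} : lockI i ≠ lockX a := lockX_ne_lockI.symm

@[simp] theorem lockYI_ne_lockX {a y i : ℕ} : lockYI y i ≠ lockX a := lockX_ne_lockYI.symm

@[simp] theorem lockYI_ne_lockI {i y i' : ℕ} : lockYI y i' ≠ lockI i := lockI_ne_lockYI.symm

variable {n d : ℕ} {A1 A2 : Fin n → Fin d → Bool} {v : Event}

theorem mem_cs {t l : ℕ} : v ∈ cs t l ↔ v.tid = t ∧ v.op.lock = some l := by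
  obtain ⟨t', o⟩ := v
  cases o <;> simp [cs, Op.lock, and_comm]

theorem mem_threadX0 {a : Fin n} :
    v ∈ threadX0 a ↔ v.tid = tidX a 0 ∧ (v.op = .write 0 ∨ v.op.lock = some (lockX a)) := by
  obtain ⟨t', o⟩ := v
  cases o <;> simp [threadX0, cs, Op.lock, and_comm]

theorem mem_threadXi {a : Fin n} {i : Fin d} :
    v ∈ threadXi A1 a i ↔ v.tid = tidX a (i + 1) ∧ (v.op.lock = some (lockX a) ∨
      A1 a i ∧ (v.op.lock = some (lockI i) ∨
        isLast A1 a i ∧ ∃ y : Fin n, v.op.lock = some (lockYI y i))) := by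
  unfold threadXi
  split_ifs <;> simp_all [mem_cs, mem_flatten]
  all_goals aesop

theorem mem_threadY {y : Fin n} :
    v ∈ threadY A2 y ↔ v.tid = tidY y ∧
      ((∃ i, A2 y i ∧ v.op.lock = some (lockYI y i)) ∨ v.op = .read 0) := by
  simp only [threadY, mem_append, mem_flatten, mem_map, mem_filter, mem_finRange, true_and,
    mem_singleton, exists_exists_and_eq_and, mem_cs]
  obtain ⟨t, o⟩ := v
  cases o <;> simp [Op.lock] <;> aesop

theorem nodup_cs {t l : ℕ} : (cs t l).Nodup := by simp [cs]

theorem nodup_threadXi {a : Fin n} {i : Fin d} : (threadXi A1 a i).Nodup := by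
  have hys : ((finRange n).map fun y : Fin n => cs (tidX a (i + 1)) (lockYI y i)).flatten.Nodup :=
    nodup_flatten_map (nodup_finRange _) (fun _ => nodup_cs) fun y y' v hy hy' => by
      simp_all [mem_cs, Fin.val_inj]
  unfold threadXi
  split_ifs <;> simp_all [nodup_append, nodup_cs, mem_cs, mem_flatten] <;> aesop

theorem nodup_threadY {y : Fin n} : (threadY A2 y).Nodup := by
  have hcs : (((finRange d).filter fun i => A2 y i).map
      fun i : Fin d => cs (tidY y) (lockYI y i)).flatten.Nodup :=
    nodup_flatten_map ((nodup_finRange d).filter _) (fun _ => nodup_cs) fun i i' v hi hi' => by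
      simp_all [mem_cs, Fin.val_inj]
  refine nodup_append.2 ⟨hcs, nodup_singleton _, fun v hv w hw hvw => ?_⟩
  rw [mem_singleton] at hw
  subst hvw hw
  simp [mem_flatten, mem_cs, Op.lock] at hv

noncomputable def groupX (A1 : Fin n → Fin d → Bool) (a : Fin n) : List Event :=
  threadX0 a ++ ((finRange d).map (threadXi A1 a)).flatten

noncomputable def xEvents (A1 : Fin n → Fin d → Bool) : List Event :=
  ((finRange n).map (groupX A1)).flatten

def yEvents (A2 : Fin n → Fin d → Bool) : List Event :=
  ((finRange n).map (threadY A2)).flatten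

-- `ovhbTrace A1 A2` is `Trace.ofList (events A1 A2)` by definition.
noncomputable def events (A1 A2 : Fin n → Fin d → Bool) : List Event :=
  xEvents A1 ++ yEvents A2

theorem mem_groupX {a : Fin n} :
    v ∈ groupX A1 a ↔ v ∈ threadX0 a ∨ ∃ i, v ∈ threadXi A1 a i := by
  simp [groupX, mem_flatten]

theorem mem_xEvents : v ∈ xEvents A1 ↔ ∃ a, v ∈ groupX A1 a := by
  simp [xEvents, mem_flatten]

theorem mem_yEvents : v ∈ yEvents A2 ↔ ∃ y, v ∈ threadY A2 y := by
  simp [yEvents, mem_flatten]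

theorem tid_of_mem_groupX {a : Fin n} (h : v ∈ groupX A1 a) : ∃ j, v.tid = tidX a j := by
  rcases mem_groupX.1 h with h | ⟨i, h⟩
  · exact ⟨0, (mem_threadX0.1 h).1⟩
  · exact ⟨i + 1, (mem_threadXi.1 h).1⟩

theorem nodup_events : (events A1 A2).Nodup := by
  unfold events
  have hgroup (a : Fin n) : (groupX A1 a).Nodup := by
    refine nodup_append.2 ⟨by simp [threadX0, cs], nodup_flatten_map (nodup_finRange _)
      (fun _ => nodup_threadXi) fun i i' v hi hi' => ?_, fun v hv w hw => ?_⟩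
    · simp_all [mem_threadXi, Fin.val_inj]
    · rintro rfl
      obtain ⟨i, hw⟩ : ∃ i, v ∈ threadXi A1 a i := by simpa [mem_flatten] using hw
      simpa using (mem_threadX0.1 hv).1.symm.trans (mem_threadXi.1 hw).1
  refine nodup_append.2 ⟨nodup_flatten_map (nodup_finRange _) hgroup fun a a' v ha ha' => ?_,
    nodup_flatten_map (nodup_finRange _) (fun _ => nodup_threadY) fun y y' v hy hy' => ?_,
    fun v hv w hw => ?_⟩
  · obtain ⟨j, hj⟩ := tid_of_mem_groupX ha
    obtain ⟨j', hj'⟩ := tid_of_mem_groupX ha'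
    simp_all [Fin.val_inj]
  · simp_all [mem_threadY, Fin.val_inj]
  · rintro rfl
    obtain ⟨a, ha⟩ := mem_xEvents.1 hv
    obtain ⟨y, hy⟩ := mem_yEvents.1 hw
    obtain ⟨j, hj⟩ := tid_of_mem_groupX ha
    simpa [hj] using (mem_threadY.1 hy).1

theorem mem_events : v ∈ events A1 A2 ↔
    (∃ a : Fin n, v ∈ threadX0 a) ∨ (∃ a i, v ∈ threadXi A1 a i) ∨ ∃ y, v ∈ threadY A2 y := by
  simp only [events, mem_append, mem_xEvents, mem_groupX, mem_yEvents, exists_or, or_assoc]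

theorem mem_threadXi_of_tid {a : Fin n} {i : Fin d} (hv : v ∈ events A1 A2)
    (ht : v.tid = tidX a (i + 1)) : v ∈ threadXi A1 a i := by
  rcases mem_events.1 hv with ⟨a', h⟩ | ⟨a', i', h⟩ | ⟨y, h⟩
  · simp [(mem_threadX0.1 h).1] at ht
  · obtain ⟨ha, hi⟩ := tidX_inj.1 ((mem_threadXi.1 h).1.symm.trans ht)
    obtain rfl : a' = a := Fin.ext ha
    obtain rfl : i' = i := Fin.ext (by omega)
    exact h
  · simp [(mem_threadY.1 h).1] at ht

theorem lock_of_tid_eq_tidX {a : Fin n} {j l : ℕ} (hv : v ∈ events A1 A2)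
    (ht : v.tid = tidX a j) (hl : v.op.lock = some l) :
    l = lockX a ∨ ∃ i, A1 a i ∧ (l = lockI i ∨ ∃ y : Fin n, l = lockYI y i) := by
  rcases mem_events.1 hv with ⟨a', h⟩ | ⟨a', i', h⟩ | ⟨y, h⟩
  · obtain ⟨ht', hop⟩ := mem_threadX0.1 h
    obtain rfl : a' = a := Fin.ext (tidX_inj.1 (ht'.symm.trans ht)).1
    rcases hop with hop | hop
    · simp [hop, Op.lock] at hl
    · exact .inl (Option.some_inj.1 (hl.symm.trans hop))
  · obtain ⟨ht', hop⟩ := mem_threadXi.1 h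
    obtain rfl : a' = a := Fin.ext (tidX_inj.1 (ht'.symm.trans ht)).1
    simp only [hl, Option.some_inj] at hop
    rcases hop with hop | ⟨hA, hop⟩
    · exact .inl hop
    · exact .inr ⟨i', hA, hop.imp_right And.right⟩
  · simp [(mem_threadY.1 h).1] at ht

theorem tid_of_lock_eq_lockX {a : Fin n} (hv : v ∈ events A1 A2)
    (hl : v.op.lock = some (lockX a)) : ∃ j, v.tid = tidX a j := by
  rcases mem_events.1 hv with ⟨a', h⟩ | ⟨a', i', h⟩ | ⟨y, h⟩
  · rw [mem_threadX0] at h; aesop (add norm simp [Op.lock, Fin.val_inj])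
  · rw [mem_threadXi] at h; aesop (add norm simp [Op.lock, Fin.val_inj])
  · rw [mem_threadY] at h; aesop (add norm simp [Op.lock, Fin.val_inj])

theorem mem_xEvents_or_tid_of_lock_eq_lockYI {y : Fin n} {i : ℕ} (hv : v ∈ events A1 A2)
    (hl : v.op.lock = some (lockYI y i)) : v ∈ xEvents A1 ∨ v.tid = tidY y := by
  rcases mem_append.1 hv with h | h
  · exact .inl h
  · obtain ⟨y', h⟩ := mem_yEvents.1 h
    rw [mem_threadY] at h; aesop (add norm simp [Op.lock, Fin.val_inj])

theorem cases_of_lock_eq_lockI_or_lockYI {i : Fin d} (hv : v ∈ events A1 A2)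
    (hl : v.op.lock = some (lockI i) ∨ ∃ y : ℕ, v.op.lock = some (lockYI y i)) :
    (∃ a, v ∈ threadXi A1 a i) ∨ ∃ y : Fin n, v.tid = tidY y ∧ A2 y i := by
  rcases mem_events.1 hv with ⟨a', h⟩ | ⟨a', i', h⟩ | ⟨y, h⟩
  · rw [mem_threadX0] at h; aesop (add norm simp [Op.lock, Fin.val_inj])
  · have h' := mem_threadXi.1 h
    aesop (add norm simp [Op.lock, Fin.val_inj])
  · rw [mem_threadY] at h; aesop (add norm simp [Op.lock, Fin.val_inj])

theorem threadXi_sublist_groupX {a : Fin n} {i : Fin d} : threadXi A1 a i <+ groupX A1 a :=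
  (sublist_flatten_of_mem (mem_map_of_mem (mem_finRange i))).trans (sublist_append_right _ _)

theorem groupX_sublist_events {a : Fin n} : groupX A1 a <+ events A1 A2 :=
  (sublist_flatten_of_mem (mem_map_of_mem (mem_finRange a))).trans (sublist_append_left _ _)

theorem threadY_sublist_events {y : Fin n} : threadY A2 y <+ events A1 A2 :=
  (sublist_flatten_of_mem (mem_map_of_mem (mem_finRange y))).trans (sublist_append_right _ _)

theorem pair_sublist_events_of_lt {a a' : Fin n} (h : a < a') {w : Event}
    (hv : v ∈ groupX A1 a) (hw : w ∈ groupX A1 a') : [v, w] <+ events A1 A2 :=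
  (pair_sublist_flatten_map_finRange _ h hv hw).trans (sublist_append_left _ _)

theorem pair_sublist_events {w : Event} (hv : v ∈ xEvents A1) (hw : w ∈ yEvents A2) :
    [v, w] <+ events A1 A2 :=
  pair_sublist_append hv hw

theorem pair_sublist_threadXi {a : Fin n} {i : Fin d} {w : Event} (hw : w ∈ threadXi A1 a i)
    (hwl : w.op.lock = some (lockX a)) (hv : v ∈ threadXi A1 a i)
    (hvl : v.op.lock ≠ some (lockX a)) : [w, v] <+ threadXi A1 a i := by
  unfold threadXi at hv ⊢
  refine pair_sublist_append (mem_cs.2 ⟨(mem_threadXi.1 hw).1, hwl⟩) ?_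
  exact (mem_append.1 hv).resolve_left fun h => hvl (mem_cs.1 h).2

theorem mem_threadY_of_tid {y : Fin n} (hv : v ∈ events A1 A2) (ht : v.tid = tidY y) :
    v ∈ threadY A2 y := by
  rcases mem_events.1 hv with ⟨a', h⟩ | ⟨a', i', h⟩ | ⟨y', h⟩
  · simp [(mem_threadX0.1 h).1] at ht
  · simp [(mem_threadXi.1 h).1] at ht
  · obtain rfl : y' = y := Fin.ext (tidY_inj.1 ((mem_threadY.1 h).1.symm.trans ht))
    exact h

def Downstream (A1 A2 : Fin n → Fin d → Bool) (a : Fin n) (v : Event) : Prop :=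
  (∃ j, v.tid = tidX a j) ∨
  (∃ i, A1 a i ∧ (v.op.lock = some (lockI i) ∨ ∃ y : ℕ, v.op.lock = some (lockYI y i))) ∨
  ∃ y : Fin n, v.tid = tidY y ∧ ∃ i, A1 a i ∧ A2 y i

theorem Downstream.of_thread {a : Fin n} {p q : Fin (events A1 A2).length} (hpq : p < q)
    (ht : ((events A1 A2).get p).tid = ((events A1 A2).get q).tid)
    (hp : Downstream A1 A2 a ((events A1 A2).get p)) :
    Downstream A1 A2 a ((events A1 A2).get q) := by
  have hv := get_mem (events A1 A2) p
  have hw := get_mem (events A1 A2) q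
  rcases hp with ⟨j, hj⟩ | ⟨i, hA, hl⟩ | ⟨y, hy, hxy⟩
  · exact .inl ⟨j, ht ▸ hj⟩
  · rcases cases_of_lock_eq_lockI_or_lockYI hv hl with ⟨a', hva⟩ | ⟨y, hy, hA2⟩
    · have hwa : (events A1 A2).get q ∈ threadXi A1 a' i :=
        mem_threadXi_of_tid hw (ht ▸ (mem_threadXi.1 hva).1)
      by_cases hwl : ((events A1 A2).get q).op.lock = some (lockX a')
      · have hvl : ((events A1 A2).get p).op.lock ≠ some (lockX a') := by
          rcases hl with hl | ⟨y, hl⟩ <;> rw [hl] <;> simp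
        exact absurd (nodup_events.lt_of_pair_sublist ((pair_sublist_threadXi hwa hwl hva
          hvl).trans (threadXi_sublist_groupX.trans groupX_sublist_events))) (lt_asymm hpq)
      · refine .inr (.inl ⟨i, hA, ?_⟩)
        obtain ⟨-, hwl' | ⟨-, hwl' | ⟨-, y, hwl'⟩⟩⟩ := mem_threadXi.1 hwa
        · exact absurd hwl' hwl
        · exact .inl hwl'
        · exact .inr ⟨y, hwl'⟩
    · exact .inr (.inr ⟨y, ht ▸ hy, i, hA, hA2⟩)
  · exact .inr (.inr ⟨y, ht ▸ hy, hxy⟩)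

theorem Downstream.of_relAcq {a : Fin n} {p q : Fin (events A1 A2).length} {l : ℕ}
    (hpq : p < q) (hrel : ((events A1 A2).get p).op = .release l)
    (hacq : ((events A1 A2).get q).op = .acquire l)
    (hp : Downstream A1 A2 a ((events A1 A2).get p)) :
    Downstream A1 A2 a ((events A1 A2).get q) := by
  have hv := get_mem (events A1 A2) p
  have hw := get_mem (events A1 A2) q
  have hvl : ((events A1 A2).get p).op.lock = some l := by rw [hrel]; rfl
  have hwl : ((events A1 A2).get q).op.lock = some l := by rw [hacq]; rfl
  rcases hp with ⟨j, hj⟩ | ⟨i, hA, hl⟩ | ⟨y, hy, hxy⟩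
  · rcases lock_of_tid_eq_tidX hv hj hvl with rfl | ⟨i, hA, rfl | ⟨y, rfl⟩⟩
    · exact .inl (tid_of_lock_eq_lockX hw hwl)
    · exact .inr (.inl ⟨i, hA, .inl hwl⟩)
    · exact .inr (.inl ⟨i, hA, .inr ⟨y, hwl⟩⟩)
  · exact .inr (.inl ⟨i, hA, by rwa [hwl, ← hvl]⟩)
  · have hvy := mem_threadY_of_tid hv hy
    obtain ⟨-, ⟨i, -, hl⟩ | hread⟩ := mem_threadY.1 hvy
    · rcases mem_xEvents_or_tid_of_lock_eq_lockYI hw (hwl.trans (hvl.symm.trans hl))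
        with hwx | hwy
      · exact absurd (nodup_events.lt_of_pair_sublist
          (pair_sublist_events hwx (mem_yEvents.2 ⟨y, hvy⟩))) (lt_asymm hpq)
      · exact .inr (.inr ⟨y, hwy, hxy⟩)
    · rw [hread] at hvl
      cases hvl

theorem exists_isLast {A : Fin n → Fin d → Bool} {a : Fin n} {i : Fin d} (h : A a i) :
    ∃ a', a ≤ a' ∧ isLast A a' i := by
  classical
  let s := Finset.univ.filter fun c => A c i
  have ha : a ∈ s := by simp [s, h]
  refine ⟨s.max' ⟨a, ha⟩, s.le_max' a ha, by simpa [s] using s.max'_mem ⟨a, ha⟩,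
    fun c hc => ?_⟩
  by_contra hAc
  exact (s.le_max' c (by simpa [s] using hAc)).not_gt hc

theorem pair_sublist_threadXi_of_isLast {a : Fin n} {i : Fin d} (h : isLast A1 a i)
    (y : Fin n) : [⟨tidX a (i + 1), .acquire (lockI i)⟩, ⟨tidX a (i + 1), .release (lockYI y i)⟩]
      <+ threadXi A1 a i := by
  unfold threadXi
  rw [if_pos h.1, if_pos h]
  exact (pair_sublist_append (by simp [cs]) (mem_flatten.2 ⟨_, mem_map_of_mem (mem_finRange y),
    by simp [cs]⟩)).trans (sublist_append_right _ _)

theorem reflTransGen_hbEdge_write_read {a b : Fin n} {i : Fin d} (hA : A1 a i) (hB : A2 b i) :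
    ReflTransGen (HBEdge (events A1 A2)) ⟨tidX a 0, .write 0⟩ ⟨tidY b, .read 0⟩ := by
  obtain ⟨a', haa', hlast⟩ := exists_isLast hA
  have hsub {c : Fin n} {v w : Event} (h : [v, w] <+ threadXi A1 c i) : [v, w] <+ events A1 A2 :=
    h.trans (threadXi_sublist_groupX.trans groupX_sublist_events)
  have hacqX : ⟨tidX a (i + 1), .acquire (lockX a)⟩ ∈ threadXi A1 a i :=
    mem_threadXi.2 ⟨rfl, .inl rfl⟩
  have hacqI {c : Fin n} (hc : A1 c i) : ⟨tidX c (i + 1), .acquire (lockI i)⟩ ∈ threadXi A1 c i :=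
    mem_threadXi.2 ⟨rfl, .inr ⟨hc, .inl rfl⟩⟩
  have hrelI : ⟨tidX a (i + 1), .release (lockI i)⟩ ∈ threadXi A1 a i :=
    mem_threadXi.2 ⟨rfl, .inr ⟨hA, .inl rfl⟩⟩
  have hrelYI : ⟨tidX a' (i + 1), .release (lockYI b i)⟩ ∈ xEvents A1 :=
    mem_xEvents.2 ⟨a', mem_groupX.2
      (.inr ⟨i, mem_threadXi.2 ⟨rfl, .inr ⟨hlast.1, .inr ⟨hlast, b, rfl⟩⟩⟩⟩)⟩
  have hacqYI : ⟨tidY b, .acquire (lockYI b i)⟩ ∈ yEvents A2 :=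
    mem_yEvents.2 ⟨b, mem_threadY.2 ⟨rfl, .inl ⟨i, hB, rfl⟩⟩⟩
  have write_relX : HBEdge (events A1 A2)
      ⟨tidX a 0, .write 0⟩ ⟨tidX a 0, .release (lockX a)⟩ :=
    ⟨(show [_, _] <+ threadX0 a by simp [threadX0, cs]).trans
      ((sublist_append_left _ _).trans groupX_sublist_events), .inl rfl⟩
  have relX_acqX : HBEdge (events A1 A2)
      ⟨tidX a 0, .release (lockX a)⟩ ⟨tidX a (i + 1), .acquire (lockX a)⟩ :=
    ⟨(pair_sublist_append (by simp [threadX0, cs])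
      (mem_flatten.2 ⟨_, mem_map_of_mem (mem_finRange i), hacqX⟩)).trans groupX_sublist_events,
      .inr ⟨_, rfl, rfl⟩⟩
  have acqX_acqI : ReflTransGen (HBEdge (events A1 A2))
      ⟨tidX a (i + 1), .acquire (lockX a)⟩ ⟨tidX a' (i + 1), .acquire (lockI i)⟩ := by
    rcases haa'.lt_or_eq with hlt | rfl
    · exact .tail (.single ⟨hsub (pair_sublist_threadXi hacqX rfl hrelI (by simp [Op.lock])),
        .inl rfl⟩) ⟨pair_sublist_events_of_lt hlt (mem_groupX.2 (.inr ⟨i, hrelI⟩))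
          (mem_groupX.2 (.inr ⟨i, hacqI hlast.1⟩)), .inr ⟨_, rfl, rfl⟩⟩
    · exact .single ⟨hsub (pair_sublist_threadXi hacqX rfl (hacqI hA) (by simp [Op.lock])),
        .inl rfl⟩
  have acqI_relYI : HBEdge (events A1 A2)
      ⟨tidX a' (i + 1), .acquire (lockI i)⟩ ⟨tidX a' (i + 1), .release (lockYI b i)⟩ :=
    ⟨hsub (pair_sublist_threadXi_of_isLast hlast b), .inl rfl⟩
  have relYI_acqYI : HBEdge (events A1 A2)
      ⟨tidX a' (i + 1), .release (lockYI b i)⟩ ⟨tidY b, .acquire (lockYI b i)⟩ :=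
    ⟨pair_sublist_events hrelYI hacqYI, .inr ⟨_, rfl, rfl⟩⟩
  have acqYI_read : HBEdge (events A1 A2)
      ⟨tidY b, .acquire (lockYI b i)⟩ ⟨tidY b, .read 0⟩ :=
    ⟨(pair_sublist_append (mem_flatten.2 ⟨_, mem_map_of_mem (mem_filter.2
      ⟨mem_finRange i, by simpa using hB⟩), by simp [cs]⟩) (mem_singleton_self _)).trans
        threadY_sublist_events, .inl rfl⟩
  exact ((((ReflTransGen.single write_relX).tail relX_acqX).trans acqX_acqI).tail
    acqI_relYI |>.tail relYI_acqYI |>.tail acqYI_read)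

theorem eq_of_op_eq_write (hv : v ∈ events A1 A2) (h : v.op = .write 0) :
    ∃ a : Fin n, v = ⟨tidX a 0, .write 0⟩ := by
  rcases mem_events.1 hv with ⟨a, h'⟩ | ⟨a, i, h'⟩ | ⟨y, h'⟩
  · exact ⟨a, Event.eq_mk_iff.2 ⟨(mem_threadX0.1 h').1, h⟩⟩
  · rw [mem_threadXi] at h'; aesop (add norm simp Op.lock)
  · rw [mem_threadY] at h'; aesop (add norm simp Op.lock)

theorem eq_of_op_eq_read (hv : v ∈ events A1 A2) (h : v.op = .read 0) :
    ∃ y : Fin n, v = ⟨tidY y, .read 0⟩ := by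
  rcases mem_events.1 hv with ⟨a, h'⟩ | ⟨a, i, h'⟩ | ⟨y, h'⟩
  · rw [mem_threadX0] at h'; aesop (add norm simp Op.lock)
  · rw [mem_threadXi] at h'; aesop (add norm simp Op.lock)
  · exact ⟨y, Event.eq_mk_iff.2 ⟨(mem_threadY.1 h').1, h⟩⟩

theorem hb_write_read_iff {a b : Fin n} {p q : Fin (ovhbTrace A1 A2).N}
    (hp : (events A1 A2).get p = ⟨tidX a 0, .write 0⟩)
    (hq : (events A1 A2).get q = ⟨tidY b, .read 0⟩) :
    HB (ovhbTrace A1 A2) p q ↔ ∃ i, A1 a i ∧ A2 b i := by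
  constructor
  · intro h
    have hd : Downstream A1 A2 a ((events A1 A2).get q) :=
      h.propagate (P := fun p => Downstream A1 A2 a ((events A1 A2).get p))
        Downstream.of_thread (fun _ => Downstream.of_relAcq) (.inl ⟨0, by rw [hp]⟩)
    rw [hq] at hd
    rcases hd with ⟨j, hj⟩ | ⟨i, -, hl | ⟨y, hl⟩⟩ | ⟨y, hy, hxy⟩
    · simp at hj
    · cases hl
    · cases hl
    · obtain rfl : y = b := Fin.ext (tidY_inj.1 hy).symm
      exact hxy
  · rintro ⟨i, hA, hB⟩
    exact HB.ofList_of_reflTransGen nodup_events (reflTransGen_hbEdge_write_read hA hB) hp hq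

theorem exists_write_lt_read (a b : Fin n) : ∃ p q : Fin (ovhbTrace A1 A2).N,
    (events A1 A2).get p = ⟨tidX a 0, .write 0⟩ ∧ (events A1 A2).get q = ⟨tidY b, .read 0⟩ ∧
      p < q := by
  have hw : ⟨tidX a 0, .write 0⟩ ∈ xEvents A1 :=
    mem_xEvents.2 ⟨a, mem_groupX.2 (.inl (mem_threadX0.2 ⟨rfl, .inl rfl⟩))⟩
  have hr : ⟨tidY b, .read 0⟩ ∈ yEvents A2 := mem_yEvents.2 ⟨b, mem_threadY.2 ⟨rfl, .inr rfl⟩⟩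
  obtain ⟨p, hp⟩ := mem_iff_get.1 (show _ ∈ events A1 A2 from mem_append_left _ hw)
  obtain ⟨q, hq⟩ := mem_iff_get.1 (show _ ∈ events A1 A2 from mem_append_right _ hr)
  refine ⟨p, q, hp, hq, nodup_events.lt_of_pair_sublist ?_⟩
  rw [hp, hq]
  exact pair_sublist_events hw hr

end OVHB

/-- In the OV-to-HB trace, the write `w(z)` of the thread group of `x = A1 a`
happens-before the read `r(z)` of thread `t_y` (`y = A2 b`) iff `x` and `y` are not orthogonal.
Consequently the trace has an HB-race between a write and a read of `z` iff the OV instance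
has an orthogonal pair. -/
theorem ovhb_reduction_correct {n d : ℕ} (A1 A2 : Fin n → Fin d → Bool) :
    (∀ (a b : Fin n) (e1 e2 : Fin (ovhbTrace A1 A2).N),
      (ovhbTrace A1 A2).tid e1 = tidX a.val 0 → (ovhbTrace A1 A2).op e1 = Op.write 0 →
      (ovhbTrace A1 A2).tid e2 = tidY b.val → (ovhbTrace A1 A2).op e2 = Op.read 0 →
      (HB (ovhbTrace A1 A2) e1 e2 ↔ ∃ i : Fin d, A1 a i = true ∧ A2 b i = true)) ∧
    ((∃ e1 e2 : Fin (ovhbTrace A1 A2).N,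
        (ovhbTrace A1 A2).op e1 = Op.write 0 ∧ (ovhbTrace A1 A2).op e2 = Op.read 0 ∧
        ¬ HB (ovhbTrace A1 A2) e1 e2 ∧ ¬ HB (ovhbTrace A1 A2) e2 e1) ↔
      ∃ a b : Fin n, ∀ i : Fin d, ¬ (A1 a i = true ∧ A2 b i = true)) := by
  open OVHB in
  refine ⟨fun a b e1 e2 ht1 ho1 ht2 ho2 => hb_write_read_iff
    (Event.eq_mk_iff.2 ⟨ht1, ho1⟩) (Event.eq_mk_iff.2 ⟨ht2, ho2⟩), ⟨?_, ?_⟩⟩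
  · rintro ⟨e1, e2, ho1, ho2, h12, -⟩
    obtain ⟨a, ha⟩ := eq_of_op_eq_write (get_mem _ e1) ho1
    obtain ⟨b, hb⟩ := eq_of_op_eq_read (get_mem _ e2) ho2
    exact ⟨a, b, fun i hi => h12 ((hb_write_read_iff ha hb).2 ⟨i, hi⟩)⟩
  · rintro ⟨a, b, horth⟩
    obtain ⟨e1, e2, he1, he2, hlt⟩ := exists_write_lt_read (A1 := A1) (A2 := A2) a b
    exact ⟨e1, e2, congrArg Event.op he1, congrArg Event.op he2,
      fun h => Exists.elim ((hb_write_read_iff he1 he2).1 h) horth, fun h => h.le.not_gt hlt⟩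
end

section
/- In the lockstamp-based HB characterization, for any two events e1 before e2 in trace order: e1 happens-before e2 implies there exists a lock ℓ with ReleaseLockstamp(e1)(ℓ) < AcquireLockstamp(e2)(ℓ), where the witness is obtained from the first cross-thread edge on an HB-derivation path from e1 to e2: i.e., from any HB chain f_1 = e1, ..., f_m = e2 where consecutive events are related by thread order or release-acquire edges, the first pair with differing threads gives a release f_j of some lock ℓ and acquire f_{j+1} of ℓ with pos(f_j) < pos(f_{j+1}), ReleaseLockstamp(e1)(ℓ) ≤ pos(f_j) and pos(f_{j+1}) ≤ AcquireLockstamp(e2)(ℓ). -/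
/-- Number of acquire events of lock `l` among the first `n` events. -/
def countAcq (σ : Trace) (l : ℕ) (n : ℕ) : ℕ :=
  (Finset.univ.filter (fun i : Fin σ.N => (i : ℕ) < n ∧ σ.op i = Op.acquire l)).card

/-- Number of release events of lock `l` among the first `n` events. -/
def countRel (σ : Trace) (l : ℕ) (n : ℕ) : ℕ :=
  (Finset.univ.filter (fun i : Fin σ.N => (i : ℕ) < n ∧ σ.op i = Op.release l)).card

/-- Release `j` matches acquire `i` on lock `l`. -/
def Matched (σ : Trace) (l : ℕ) (i j : Fin σ.N) : Prop :=
  σ.op i = Op.acquire l ∧ σ.op j = Op.release l ∧ i < j ∧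
    countAcq σ l ((i : ℕ) + 1) = countRel σ l ((j : ℕ) + 1)

/-- Well-formedness: per lock, acquires and releases alternate (acquire first), and
matching acquire/release pairs are performed by the same thread. -/
def WellFormed (σ : Trace) : Prop :=
  (∀ l n, countRel σ l n ≤ countAcq σ l n ∧ countAcq σ l n ≤ countRel σ l n + 1) ∧
  (∀ (l : ℕ) (i j : Fin σ.N), Matched σ l i j → σ.tid i = σ.tid j)

/-- Position of an acquire event among acquires of its lock (1-based). -/
def posAcq (σ : Trace) (l : ℕ) (f : Fin σ.N) : ℕ := countAcq σ l ((f : ℕ) + 1)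

/-- Position of a release event among releases of its lock (1-based). -/
def posRel (σ : Trace) (l : ℕ) (f : Fin σ.N) : ℕ := countRel σ l ((f : ℕ) + 1)

open scoped Classical in
/-- Acquire lockstamp: max position of an acquire of `l` happening-before-or-equal `e` (0 if none). -/
noncomputable def acqLS (σ : Trace) (e : Fin σ.N) (l : ℕ) : ℕ :=
  (Finset.univ.filter (fun f : Fin σ.N => σ.op f = Op.acquire l ∧ HB σ f e)).sup
    (fun f => posAcq σ l f)

open scoped Classical in
/-- Release lockstamp: min position of a release of `l` that `e` happens-before-or-equal (∞ if none). -/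
noncomputable def relLS (σ : Trace) (e : Fin σ.N) (l : ℕ) : ℕ∞ :=
  (Finset.univ.filter (fun f : Fin σ.N => σ.op f = Op.release l ∧ HB σ e f)).inf
    (fun f => ((posRel σ l f : ℕ) : ℕ∞))


open scoped Classical

lemma countRel_mono (σ : Trace) (l : ℕ) {m n : ℕ} (h : m ≤ n) :
    countRel σ l m ≤ countRel σ l n := by
  apply Finset.card_le_card
  intro i hi
  simp only [Finset.mem_filter, Finset.mem_univ, true_and] at hi ⊢
  exact ⟨lt_of_lt_of_le hi.1 h, hi.2⟩

lemma countAcq_succ (σ : Trace) (l : ℕ) (f : Fin σ.N) (hf : σ.op f = Op.acquire l) :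
    countAcq σ l ((f : ℕ) + 1) = countAcq σ l (f : ℕ) + 1 := by
  unfold countAcq
  have : (Finset.univ.filter (fun i : Fin σ.N => (i : ℕ) < (f : ℕ) + 1 ∧ σ.op i = Op.acquire l))
      = insert f (Finset.univ.filter (fun i : Fin σ.N => (i : ℕ) < (f : ℕ) ∧ σ.op i = Op.acquire l)) := by
    ext i
    simp only [Finset.mem_filter, Finset.mem_univ, true_and, Finset.mem_insert,
      Nat.lt_succ_iff_lt_or_eq]
    constructor
    · rintro ⟨h1 | h1, h2⟩
      · exact Or.inr ⟨h1, h2⟩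
      · exact Or.inl (Fin.ext h1)
    · rintro (rfl | ⟨h1, h2⟩)
      · exact ⟨Or.inr rfl, hf⟩
      · exact ⟨Or.inl h1, h2⟩
  rw [this, Finset.card_insert_of_notMem]
  simp

lemma exists_edge (σ : Trace) {i k : Fin σ.N} (h : HB σ i k) (hne : σ.tid i ≠ σ.tid k) :
    ∃ (l : ℕ) (g f : Fin σ.N), σ.op g = Op.release l ∧ σ.op f = Op.acquire l ∧
      HB σ i g ∧ HB σ f k ∧ g < f := by
  induction h with
  | refl => exact absurd rfl hne
  | thread hlt ht => exact absurd ht hne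
  | relAcq l hlt hr ha => exact ⟨l, _, _, hr, ha, HB.refl _, HB.refl _, hlt⟩
  | @trans i j k h1 h2 ih1 ih2 =>
    by_cases heq : σ.tid i = σ.tid j
    · obtain ⟨l, g, f, hg, hf, hig, hfk, hgf⟩ := ih2 (fun hjk => hne (heq.trans hjk))
      exact ⟨l, g, f, hg, hf, HB.trans h1 hig, hfk, hgf⟩
    · obtain ⟨l, g, f, hg, hf, hig, hfj, hgf⟩ := ih1 heq
      exact ⟨l, g, f, hg, hf, hig, HB.trans hfj h2, hgf⟩

/-- If `e1` happens-before `e2` (trace order `e1 < e2`, different threads),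
then some lock `ℓ` witnesses `relLS(e1)(ℓ) < acqLS(e2)(ℓ)`; the witness comes from a
release `g` of `ℓ` with `e1` HB `g` and an acquire `f` of `ℓ` with `f` HB `e2`, satisfying
`relLS(e1)(ℓ) ≤ pos(g) < pos(f) ≤ acqLS(e2)(ℓ)`. -/
theorem hb_implies_lockstamp_witness (σ : Trace) (hwf : WellFormed σ) (e1 e2 : Fin σ.N)
    (hlt : e1 < e2) (htid : σ.tid e1 ≠ σ.tid e2) (hhb : HB σ e1 e2) :
    ∃ (l : ℕ) (g f : Fin σ.N),
      σ.op g = Op.release l ∧ σ.op f = Op.acquire l ∧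
      HB σ e1 g ∧ HB σ f e2 ∧ g < f ∧
      relLS σ e1 l ≤ ((posRel σ l g : ℕ) : ℕ∞) ∧
      posRel σ l g < posAcq σ l f ∧
      posAcq σ l f ≤ acqLS σ e2 l ∧
      relLS σ e1 l < ((acqLS σ e2 l : ℕ) : ℕ∞) := by
  obtain ⟨l, g, f, hg, hf, hig, hfk, hgf⟩ := exists_edge σ hhb htid
  have hrel : relLS σ e1 l ≤ ((posRel σ l g : ℕ) : ℕ∞) := by
    apply Finset.inf_le
    simp only [Finset.mem_filter, Finset.mem_univ, true_and]
    exact ⟨hg, hig⟩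
  have hacq : posAcq σ l f ≤ acqLS σ e2 l := by
    apply Finset.le_sup
    simp only [Finset.mem_filter, Finset.mem_univ, true_and]
    exact ⟨hf, hfk⟩
  have hmid : posRel σ l g < posAcq σ l f := by
    unfold posRel posAcq
    rw [countAcq_succ σ l f hf]
    have h1 : countRel σ l ((g : ℕ) + 1) ≤ countRel σ l (f : ℕ) :=
      countRel_mono σ l hgf
    have h2 : countRel σ l (f : ℕ) ≤ countAcq σ l (f : ℕ) := (hwf.1 l (f : ℕ)).1
    omega
  refine ⟨l, g, f, hg, hf, hig, hfk, hgf, hrel, hmid, hacq, ?_⟩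
  calc relLS σ e1 l ≤ ((posRel σ l g : ℕ) : ℕ∞) := hrel
    _ < ((posAcq σ l f : ℕ) : ℕ∞) := by exact_mod_cast hmid
    _ ≤ ((acqLS σ e2 l : ℕ) : ℕ∞) := by exact_mod_cast hacq
end
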